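/- arXiv:2211.02688 — 3 statements merged into one kernel-verified Lean document; each statement's English description precedes it below -/
import Mathlib

section
/- In a dagger category satisfying the positivity axiom (monomorphisms r : H → L and s : K → L satisfy r = s ∘ t for some isomorphism t iff r ∘ r† = s ∘ s†), every isomorphism r satisfies r⁻¹ = r†. -/
open CategoryTheory

/-- A dagger structure on a category: a contravariant identity-on-objects
involutive endofunctor. -/
class DaggerCategory (C : Type*) [Category C] where
  dag : ∀ {X Y : C}, (X ⟶ Y) → (Y ⟶ X)
  dag_id : ∀ X : C, dag (𝟙 X) = 𝟙 X
  dag_dag : ∀ {X Y : C} (f : X ⟶ Y), dag (dag f) = f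
  dag_comp : ∀ {X Y Z : C} (f : X ⟶ Y) (g : Y ⟶ Z), dag (f ≫ g) = dag g ≫ dag f

open DaggerCategory

theorem iso_is_dagger_iso
    {C : Type*} [Category C] [DaggerCategory C]
    (positivity : ∀ {H K L : C} (r : H ⟶ L) (s : K ⟶ L), Mono r → Mono s →
      ((∃ t : H ≅ K, r = t.hom ≫ s) ↔ dag r ≫ r = dag s ≫ s)) :
    ∀ {H L : C} (r : H ≅ L), r.inv = dag r.hom := by
  intro H L r
  have h : dag r.hom ≫ r.hom = dag (𝟙 L) ≫ 𝟙 L :=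
    (positivity r.hom (𝟙 L) inferInstance inferInstance).mp ⟨r, by simp⟩
  rw [dag_id, Category.comp_id] at h
  calc r.inv = (dag r.hom ≫ r.hom) ≫ r.inv := by rw [h]; simp
    _ = dag r.hom := by simp
end

section
/- In a dagger category with dagger equalizers where the kernel-factorization holds, every split monomorphism is a dagger monomorphism: assuming every isomorphism is a dagger isomorphism and every morphism t factors as t = k ∘ e with k a dagger monomorphism and e an epimorphism, every split monomorphism t satisfies t† ∘ t = id. -/
open CategoryTheory

open DaggerCategory

/-!
Factor a split monomorphism `t` as `t = e ≫ k` with `e` epi and `k` a dagger monomorphism.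
If `l` is a retraction of `t`, then `k ≫ l` is a retraction of `e`, so `e` is a split mono
and an epi, hence an isomorphism; by hypothesis its inverse is `dag e`, so `e` is a dagger
monomorphism too, and dagger monomorphisms compose.
-/

namespace DaggerCategory

variable {C : Type*} [Category C] [DaggerCategory C]

def IsDaggerMono {X Y : C} (f : X ⟶ Y) : Prop := f ≫ dag f = 𝟙 X

theorem IsDaggerMono.comp {X Y Z : C} {f : X ⟶ Y} {g : Y ⟶ Z}
    (hf : IsDaggerMono f) (hg : IsDaggerMono g) : IsDaggerMono (f ≫ g) := by
  rw [IsDaggerMono, dag_comp, Category.assoc, ← Category.assoc g, hg, Category.id_comp, hf]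

theorem isDaggerMono_of_inv_eq_dag {X Y : C} {f : X ⟶ Y} [IsIso f] (h : inv f = dag f) :
    IsDaggerMono f := by
  rw [IsDaggerMono, ← h, IsIso.hom_inv_id]

end DaggerCategory

theorem split_mono_is_dagger_mono
    {C : Type*} [Category C] [DaggerCategory C]
    (iso_dagger : ∀ {H L : C} (r : H ≅ L), r.inv = dag r.hom)
    (factor : ∀ {H K : C} (t : H ⟶ K), ∃ (E : C) (e : H ⟶ E) (k : E ⟶ K),
      Epi e ∧ k ≫ dag k = 𝟙 E ∧ t = e ≫ k) :
    ∀ {H K : C} (t : H ⟶ K), (∃ l : K ⟶ H, t ≫ l = 𝟙 H) → t ≫ dag t = 𝟙 H := by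
  rintro H K t ⟨l, hl⟩
  obtain ⟨E, e, k, he, hk, rfl⟩ := factor t
  have : IsSplitMono e := .mk' ⟨k ≫ l, by rwa [← Category.assoc]⟩
  have : IsIso e := isIso_of_epi_of_isSplitMono e
  have he_dag : IsDaggerMono e := isDaggerMono_of_inv_eq_dag (iso_dagger (asIso e))
  exact he_dag.comp hk
end

section
/- In a monoidal dagger category where the tensor unit I is dagger simple and morphisms factor as epi followed by dagger mono, every nonzero scalar z : I → I is both monic and epic. -/
/-!
A nonzero scalar `z` factors as an epimorphism followed by a dagger monomorphism into `I`;
dagger simplicity makes the latter invertible, so `z` is epic. Since `dag z` is again a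
nonzero scalar it is epic too, and applying the dagger turns this into `z` being monic.
-/

open CategoryTheory MonoidalCategory

open DaggerCategory

namespace DaggerCategory

variable {C : Type*} [Category C] [DaggerCategory C]

lemma dag_injective {X Y : C} : Function.Injective (dag : (X ⟶ Y) → (Y ⟶ X)) :=
  fun f g h => by rw [← dag_dag f, h, dag_dag]

lemma mono_of_epi_dag {X Y : C} (f : X ⟶ Y) [Epi (dag f)] : Mono f :=
  ⟨fun g h w => dag_injective <| (cancel_epi (dag f)).1 <| by rw [← dag_comp, ← dag_comp, w]⟩

variable [Limits.HasZeroMorphisms C]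

@[simp]
lemma dag_zero (X Y : C) : dag (0 : X ⟶ Y) = 0 := by
  have h := congrArg dag (Limits.comp_zero (f := dag (0 : Y ⟶ X)) (Z := Y))
  rwa [dag_comp, dag_dag, Limits.comp_zero, eq_comm] at h

lemma dag_ne_zero {X Y : C} {f : X ⟶ Y} (hf : f ≠ 0) : dag f ≠ 0 := by
  rwa [Ne, ← dag_zero, dag_injective.eq_iff]

lemma epi_comp_of_ne_zero_of_dagger_simple {K : C}
    (hK : ∀ {S : C} (m : S ⟶ K), m ≫ dag m = 𝟙 S → IsIso m ∨ m = 0)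
    {H E : C} (e : H ⟶ E) [Epi e] (k : E ⟶ K) (hk : k ≫ dag k = 𝟙 E) (hek : e ≫ k ≠ 0) :
    Epi (e ≫ k) := by
  rcases hK k hk with hiso | rfl
  · infer_instance
  · exact absurd Limits.comp_zero hek

end DaggerCategory

theorem nonzero_scalars_monic_epic
    {C : Type*} [Category C] [MonoidalCategory C]
    [Limits.HasZeroMorphisms C] [DaggerCategory C]
    -- the tensor unit is dagger simple
    (dagger_simple : ∀ {S : C} (m : S ⟶ 𝟙_ C), m ≫ dag m = 𝟙 S → IsIso m ∨ m = 0)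
    -- every morphism factors as an epimorphism followed by a dagger monomorphism
    (factor : ∀ {H K : C} (t : H ⟶ K), ∃ (E : C) (e : H ⟶ E) (k : E ⟶ K),
      Epi e ∧ k ≫ dag k = 𝟙 E ∧ t = e ≫ k) :
    ∀ z : 𝟙_ C ⟶ 𝟙_ C, z ≠ 0 → Mono z ∧ Epi z := by
  have epi_of_ne_zero (w : 𝟙_ C ⟶ 𝟙_ C) (hw : w ≠ 0) : Epi w := by
    obtain ⟨E, e, k, he, hk, rfl⟩ := factor w
    exact epi_comp_of_ne_zero_of_dagger_simple dagger_simple e k hk hw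
  intro z hz
  have := epi_of_ne_zero (dag z) (dag_ne_zero hz)
  exact ⟨mono_of_epi_dag z, epi_of_ne_zero z hz⟩
end
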